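/- For each k with 1 ≤ k ≤ h−1, there exists at least one positive root α ∈ R⁺ \ R_i⁺ with ⟨ρ, α∨⟩ = k, where ϖ_i is a minuscule fundamental weight and R_i is the subsystem generated by simple roots other than α_i. -/

import Mathlib

open scoped BigOperators

/-- The ambient Euclidean space of rank `n`. -/
abbrev EV (n : ℕ) : Type := EuclideanSpace ℝ (Fin n)

/-- The inner product `⟨x, y⟩` on `EV n`. -/
noncomputable def ip {n : ℕ} (x y : EV n) : ℝ := inner ℝ x y

/-- The pairing `⟨x, α∨⟩ = 2⟨x, α⟩/⟨α, α⟩` of a vector with the coroot of `α`. -/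
noncomputable def pairing {n : ℕ} (x α : EV n) : ℝ := 2 * ip x α / ip α α

/-- The coroot `α∨ = 2α/⟨α,α⟩`. -/
noncomputable def coroot {n : ℕ} (α : EV n) : EV n := (2 / ip α α) • α

/-- The subgroup of the affine transformation group consisting of (generated by)
all translations `t(v)`, `v ∈ L`. -/
noncomputable def transOf {n : ℕ} (L : AddSubgroup (EV n)) : Subgroup (EV n ≃ᵃ[ℝ] EV n) :=
  Subgroup.closure {g | ∃ v ∈ L, ∀ x, g x = x + v}

/-- The lattice `l·L`. -/
noncomputable def smulLat {n : ℕ} (l : ℕ) (L : AddSubgroup (EV n)) : AddSubgroup (EV n) :=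
  AddSubgroup.map (AddMonoidHom.mk' (fun v => (l : ℝ) • v) (fun a b => smul_add _ a b)) L

/-- An abstract reduced crystallographic **irreducible root system** of rank `n`,
realized in Euclidean space, together with a choice of positive roots and of
simple roots. -/
structure RootSystemData (n : ℕ) where
  /-- the set of roots -/
  Φ : Finset (EV n)
  /-- the positive roots `R⁺` -/
  pos : Finset (EV n)
  /-- the simple roots -/
  simple : Fin n → EV n
  zero_not_mem : (0 : EV n) ∉ Φ
  span_top : Submodule.span ℝ (Φ : Set (EV n)) = ⊤
  neg_mem : ∀ α ∈ Φ, -α ∈ Φ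
  pair_int : ∀ α ∈ Φ, ∀ β ∈ Φ, ∃ k : ℤ, pairing α β = (k : ℝ)
  reflect_mem : ∀ α ∈ Φ, ∀ β ∈ Φ, α - pairing α β • β ∈ Φ
  reduced : ∀ α ∈ Φ, (2 : ℝ) • α ∉ Φ
  pos_subset : pos ⊆ Φ
  pos_iff : ∀ α ∈ Φ, (α ∈ pos ↔ -α ∉ pos)
  simple_mem_pos : ∀ i, simple i ∈ pos
  pos_sum : ∀ α ∈ pos, ∃ c : Fin n → ℕ, α = ∑ i, (c i : ℝ) • simple i
  irred : ∀ s : Finset (EV n), s ⊆ Φ → s.Nonempty →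
    (∀ α ∈ s, ∀ β ∈ Φ, ip α β ≠ 0 → β ∈ s) → s = Φ

namespace RootSystemData

variable {n : ℕ} (P : RootSystemData n)

/-- `ρ`, half the sum of the positive roots. -/
noncomputable def rho : EV n := (2⁻¹ : ℝ) • ∑ α ∈ P.pos, α

/-- The Coxeter number `h = |Φ| / rank`. -/
def cox : ℕ := P.Φ.card / n

/-- `ϖ` is the fundamental dominant weight attached to the simple root `α_i`. -/
def IsFundWeight (i : Fin n) (ϖ : EV n) : Prop :=
  ∀ j, pairing ϖ (P.simple j) = if j = i then 1 else 0

/-- The root lattice `ℤR`. -/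
noncomputable def rootLattice : AddSubgroup (EV n) :=
  AddSubgroup.closure (P.Φ : Set (EV n))

/-- The weight lattice `X = {x | ⟨x, α∨⟩ ∈ ℤ for all roots α}`. -/
noncomputable def weightLattice : AddSubgroup (EV n) where
  carrier := {x | ∀ α ∈ P.Φ, ∃ k : ℤ, pairing x α = (k : ℝ)}
  zero_mem' := by
    intro α _
    exact ⟨0, by simp [pairing, ip]⟩
  add_mem' := by
    intro x y hx hy α hα
    obtain ⟨k₁, h₁⟩ := hx α hα
    obtain ⟨k₂, h₂⟩ := hy α hα
    refine ⟨k₁ + k₂, ?_⟩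
    have h : pairing (x + y) α = pairing x α + pairing y α := by
      simp only [pairing, ip, inner_add_left]
      ring
    rw [h, h₁, h₂]
    push_cast
    ring
  neg_mem' := by
    intro x hx α hα
    obtain ⟨k, h⟩ := hx α hα
    refine ⟨-k, ?_⟩
    have h' : pairing (-x) α = -pairing x α := by
      simp only [pairing, ip, inner_neg_left]
      ring
    rw [h', h]
    push_cast
    ring

/-- `x` is a dominant vector. -/
def Dominant (x : EV n) : Prop := ∀ i, 0 ≤ pairing x (P.simple i)

/-- The dominance order: `x ≤ y` iff `y - x` is a nonnegative integral
combination of the simple roots. -/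
def DomLE (x y : EV n) : Prop :=
  ∃ c : Fin n → ℕ, y - x = ∑ i, (c i : ℝ) • P.simple i

/-- `ϖ` is a minuscule weight: a nonzero dominant weight such that every dominant
weight `x ≤ ϖ` equals `ϖ`. -/
def Minuscule (ϖ : EV n) : Prop :=
  ϖ ≠ 0 ∧ ϖ ∈ P.weightLattice ∧ P.Dominant ϖ ∧
    ∀ x ∈ P.weightLattice, P.Dominant x → P.DomLE x ϖ → x = ϖ

/-- `ϖ` is the minuscule fundamental weight attached to the simple root `α_i`. -/
def MinusculeFundWeight (i : Fin n) (ϖ : EV n) : Prop :=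
  P.IsFundWeight i ϖ ∧ P.Minuscule ϖ

/-- `α₀` is the dominant (=highest) short root; its coroot is the highest coroot. -/
def IsDominantShortRoot (α₀ : EV n) : Prop :=
  α₀ ∈ P.pos ∧ (∀ β ∈ P.Φ, ip α₀ α₀ ≤ ip β β) ∧ P.Dominant α₀

/-- The value `d(x) = ∏_{α > 0} ⟨x + ρ, α∨⟩ / ⟨ρ, α∨⟩` of Weyl's degree formula. -/
noncomputable def weylDeg (x : EV n) : ℝ :=
  ∏ α ∈ P.pos, (pairing (x + P.rho) α / pairing P.rho α)

/-- The positive roots `R_i⁺` of the subsystem `R_i` spanned by the simple roots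
other than `α_i`. -/
def posIn (i : Fin n) : Set (EV n) :=
  {α | α ∈ P.pos ∧ α ∈ Submodule.span ℝ (P.simple '' {j | j ≠ i})}

/-- The finite Weyl group `W`, generated by the reflections `s_α`, viewed inside
the group of affine transformations of `EV n`. -/
noncomputable def weyl : Subgroup (EV n ≃ᵃ[ℝ] EV n) :=
  Subgroup.closure {g | ∃ α ∈ P.Φ, ∀ x, g x = x - pairing x α • coroot α}

/-- The parabolic subgroup `W_i` of `W` generated by the simple reflections `s_j`, `j ≠ i`. -/
noncomputable def weylParab (i : Fin n) : Subgroup (EV n ≃ᵃ[ℝ] EV n) :=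
  Subgroup.closure {g | ∃ j, j ≠ i ∧ ∀ x,
    g x = x - pairing x (P.simple j) • coroot (P.simple j)}

/-- The affine Weyl group `W_l`, generated by the affine reflections `s_{α, lk}`
in the hyperplanes `{x | ⟨x, α∨⟩ = lk}`, `α ∈ Φ`, `k ∈ ℤ`. -/
noncomputable def affWeyl (l : ℕ) : Subgroup (EV n ≃ᵃ[ℝ] EV n) :=
  Subgroup.closure {g | ∃ α ∈ P.Φ, ∃ k : ℤ,
    ∀ x, g x = x - (pairing x α - l * k) • coroot α}

/-- The extended affine Weyl group `Ŵ_l`, generated by `W` and the translations `t(lX)`. -/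
noncomputable def extAffWeyl (l : ℕ) : Subgroup (EV n ≃ᵃ[ℝ] EV n) :=
  P.weyl ⊔ transOf (smulLat l P.weightLattice)

/-- The lowest alcove `C_l = {x | 0 < ⟨x + ρ, α∨⟩ < l for all α ∈ R⁺}`. -/
noncomputable def lowAlcove (l : ℕ) : Set (EV n) :=
  {x | ∀ α ∈ P.pos, 0 < pairing (x + P.rho) α ∧ pairing (x + P.rho) α < l}

/-- The orbit of `0` under the dot action `w • x = w(x + ρ) - ρ` of a subgroup `H`
of the affine transformation group. -/
noncomputable def dotOrbitZero (H : Subgroup (EV n ≃ᵃ[ℝ] EV n)) : Set (EV n) :=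
  {v | ∃ w ∈ H, w P.rho - P.rho = v}

end RootSystemData

/-!
For minuscule `ϖ = ϖ_i` every positive root has `⟨ϖ, β∨⟩ ∈ {0, 1}`, and `R⁺ \ R_i⁺` is the level
`⟨ϖ, β∨⟩ = 1`. Since `W_i` permutes this level, its roots add up to `t • ϖ` for a scalar `t`.

*Counting.* The operator `x ↦ ∑_{α ∈ Φ} ⟨α, x⟩ α / |α|²` commutes with all reflections, so it is a
scalar `c` by irreducibility. Its trace is `|Φ| = n c`, and evaluating it at `ϖ` gives `c = t`;
hence `h = t`.

*Heights.* The longest element of `W_i` maps the level onto itself with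
`⟨ρ, β∨⟩ ↦ t - ⟨ρ, β∨⟩`, so the heights on the level lie in `[1, t - 1]` and are symmetric
there. A root of the level of height `m ≥ 2` has a neighbour of height `m - 1` along a root string,
unless `⟨β, α_i∨⟩ = 2`, in which case `β - α_i` lies on the level with height `2m - 1`. Starting at
the top and using the symmetry, this forces every height in `[1, t - 1]` to occur.
-/

open scoped RealInnerProductSpace
open Finset

lemma Finset.sum_eq_sum_of_mapsTo {E : Type*} [AddCommMonoid E] {s : Finset E} {f : E → E}
    (hf : ∀ x ∈ s, f x ∈ s) (hinj : f.Injective) : ∑ x ∈ s, f x = ∑ x ∈ s, x :=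
  sum_nbij f hf hinj.injOn (surjOn_of_injOn_of_card_le f hf hinj.injOn le_rfl) fun _ _ => rfl

lemma Nat.mem_of_symmetric_of_descend {S : Set ℕ} {M : ℕ} (hM : M ∈ S) (hle : ∀ m ∈ S, m ≤ M)
    (hsymm : ∀ m ∈ S, M + 1 - m ∈ S) (hdesc : ∀ m ∈ S, 2 ≤ m → m - 1 ∈ S ∨ 2 * m - 1 ∈ S)
    {k : ℕ} (hk : 1 ≤ k) (hkM : k ≤ M) : k ∈ S := by
  -- descending from `M`, the alternative `2m - 1` exceeds `M` as long as `M < 2m`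
  have hupper : ∀ d, M < 2 * (M - d) → M - d ∈ S := by
    intro d
    induction d with
    | zero => simpa using fun _ => hM
    | succ d ih =>
      intro h
      rcases hdesc _ (ih (by omega)) (by omega) with h' | h'
      · rwa [show M - (d + 1) = M - d - 1 by omega]
      · exact absurd (hle _ h') (by omega)
  by_cases hk2 : M < 2 * k
  · simpa [show M - (M - k) = k by omega] using hupper (M - k) (by omega)
  · simpa [show M + 1 - (M - (k - 1)) = k by omega] using hsymm _ (hupper (k - 1) (by omega))

section Euclidean

variable {n : ℕ}

lemma pairing_eq_mul (x α : EV n) : pairing x α = 2 / ⟪α, α⟫ * ⟪x, α⟫ := by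
  simp only [pairing, ip]; ring

lemma pairing_eq_inner_coroot (x α : EV n) : pairing x α = ⟪x, coroot α⟫ := by
  simp only [pairing_eq_mul, coroot, ip, real_inner_smul_right]

lemma pairing_self {α : EV n} (hα : α ≠ 0) : pairing α α = 2 := by
  have : ⟪α, α⟫ ≠ 0 := inner_self_ne_zero.2 hα
  rw [pairing_eq_mul]; field_simp

lemma pairing_pos_iff {x α : EV n} (hα : α ≠ 0) : 0 < pairing x α ↔ 0 < ⟪x, α⟫ := by
  have : 0 < ⟪α, α⟫ := real_inner_self_pos.2 hα
  rw [pairing_eq_mul]; exact mul_pos_iff_of_pos_left (by positivity)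

lemma pairing_nonneg_iff {x α : EV n} (hα : α ≠ 0) : 0 ≤ pairing x α ↔ 0 ≤ ⟪x, α⟫ := by
  have : 0 < ⟪α, α⟫ := real_inner_self_pos.2 hα
  rw [pairing_eq_mul]; exact mul_nonneg_iff_of_pos_left (by positivity)

lemma pairing_eq_zero_iff {x α : EV n} (hα : α ≠ 0) : pairing x α = 0 ↔ ⟪x, α⟫ = 0 := by
  have : 0 < ⟪α, α⟫ := real_inner_self_pos.2 hα
  rw [pairing_eq_mul, mul_eq_zero, or_iff_right (by positivity)]

lemma pairing_sub_left (x y α : EV n) : pairing (x - y) α = pairing x α - pairing y α := by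
  simp only [pairing_eq_inner_coroot, inner_sub_left]

lemma pairing_smul_left (c : ℝ) (x α : EV n) : pairing (c • x) α = c * pairing x α := by
  simp only [pairing_eq_inner_coroot, real_inner_smul_left]

lemma eq_zero_of_inner_eq_zero {S : Set (EV n)} (hS : Submodule.span ℝ S = ⊤) {x : EV n}
    (hx : ∀ α ∈ S, ⟪x, α⟫ = 0) : x = 0 := by
  have : Submodule.span ℝ S ≤ LinearMap.ker (innerₛₗ ℝ x) :=
    Submodule.span_le.2 fun α hα => by simpa using hx α hα
  rw [hS, top_le_iff, LinearMap.ker_eq_top] at this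
  simpa using LinearMap.congr_fun this x

lemma pairing_map (g : EV n ≃ₗᵢ[ℝ] EV n) (x α : EV n) : pairing (g x) (g α) = pairing x α := by
  simp only [pairing, ip, LinearIsometryEquiv.inner_map_map]

lemma coroot_map (g : EV n ≃ₗᵢ[ℝ] EV n) (α : EV n) : coroot (g α) = g (coroot α) := by
  simp only [coroot, ip, LinearIsometryEquiv.inner_map_map, map_smul]

lemma coroot_neg (α : EV n) : coroot (-α) = -coroot α := by
  simp only [coroot, ip, inner_neg_neg, smul_neg]

lemma pairing_neg_right (x α : EV n) : pairing x (-α) = -pairing x α := by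
  simp only [pairing_eq_inner_coroot, coroot_neg, inner_neg_right]

noncomputable def rootReflection (α : EV n) : EV n ≃ₗᵢ[ℝ] EV n := (ℝ ∙ α)ᗮ.reflection

lemma rootReflection_apply (α x : EV n) : rootReflection α x = x - pairing x α • α := by
  rw [rootReflection, Submodule.reflection_orthogonal_apply, Submodule.reflection_singleton_apply]
  simp only [pairing, ip]
  rw [real_inner_self_eq_norm_sq, real_inner_comm]
  module

lemma rootReflection_symm (α : EV n) : (rootReflection α).symm = rootReflection α :=
  Submodule.reflection_symm

@[simp]
lemma rootReflection_rootReflection (α x : EV n) : rootReflection α (rootReflection α x) = x :=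
  Submodule.reflection_reflection _ x

lemma rootReflection_self {α : EV n} (hα : α ≠ 0) : rootReflection α α = -α := by
  rw [rootReflection_apply, pairing_self hα]; module

lemma coroot_rootReflection (γ β : EV n) :
    coroot (rootReflection γ β) = coroot β - pairing γ β • coroot γ := by
  rw [coroot_map, rootReflection_apply]
  simp only [pairing, coroot, ip, real_inner_smul_left, smul_smul, real_inner_comm β γ]
  congr 2
  ring

end Euclidean

namespace RootSystemData

variable {n : ℕ} (P : RootSystemData n)

lemma ne_zero_of_mem {α : EV n} (hα : α ∈ P.Φ) : α ≠ 0 := fun h => P.zero_not_mem (h ▸ hα)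

lemma simple_mem (j : Fin n) : P.simple j ∈ P.Φ := P.pos_subset (P.simple_mem_pos j)

lemma simple_ne_zero (j : Fin n) : P.simple j ≠ 0 := P.ne_zero_of_mem (P.simple_mem j)

lemma neg_mem_pos_of_not_mem_pos {α : EV n} (hα : α ∈ P.Φ) (h : α ∉ P.pos) : -α ∈ P.pos :=
  not_not.1 fun h' => h ((P.pos_iff α hα).2 h')

lemma not_mem_pos_of_neg_mem_pos {α : EV n} (hα : α ∈ P.Φ) (h : -α ∈ P.pos) : α ∉ P.pos :=
  fun h' => (P.pos_iff α hα).1 h' h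

lemma rootReflection_mem_iff {γ : EV n} (hγ : γ ∈ P.Φ) (α : EV n) :
    rootReflection γ α ∈ P.Φ ↔ α ∈ P.Φ := by
  have key : ∀ x ∈ P.Φ, rootReflection γ x ∈ P.Φ := fun x hx => by
    rw [rootReflection_apply]; exact P.reflect_mem x hx γ hγ
  exact ⟨fun h => by simpa using key _ h, key α⟩

lemma pairing_eq_one_or_eq_one {β γ : EV n} (hβ : β ∈ P.Φ) (hγ : γ ∈ P.Φ) (hne : β ≠ γ)
    (hpos : 0 < ⟪β, γ⟫) : pairing β γ = 1 ∨ pairing γ β = 1 := by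
  obtain ⟨p, hp⟩ := P.pair_int β hβ γ hγ
  obtain ⟨q, hq⟩ := P.pair_int γ hγ β hβ
  have hp0 : (0 : ℝ) < p := hp ▸ (pairing_pos_iff (P.ne_zero_of_mem hγ)).2 hpos
  have hq0 : (0 : ℝ) < q := hq ▸ (pairing_pos_iff (P.ne_zero_of_mem hβ)).2 (by
    rwa [real_inner_comm])
  by_contra! h
  rw [hp, hq] at h
  have two_le : ∀ k : ℤ, (0 : ℝ) < k → (k : ℝ) ≠ 1 → (2 : ℝ) ≤ k := fun k h0 h1 => by
    have : 0 < k := by exact_mod_cast h0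
    have : k ≠ 1 := by exact_mod_cast h1
    exact_mod_cast (by omega : 2 ≤ k)
  have hp2 := two_le p hp0 h.1
  have hq2 := two_le q hq0 h.2
  -- Cauchy–Schwarz then forces `⟨β, γ⟩ = |β|² = |γ|²`, i.e. `|β - γ|² = 0`.
  have hb : 0 < ⟪β, β⟫ := real_inner_self_pos.2 (P.ne_zero_of_mem hβ)
  have hg : 0 < ⟪γ, γ⟫ := real_inner_self_pos.2 (P.ne_zero_of_mem hγ)
  simp only [← hp, pairing, ip] at hp2; rw [le_div_iff₀ hg] at hp2
  simp only [← hq, pairing, ip, real_inner_comm β γ] at hq2; rw [le_div_iff₀ hb] at hq2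
  have hcs := real_inner_mul_inner_self_le β γ
  have hbg : ⟪β, γ⟫ = ⟪γ, γ⟫ := by nlinarith
  have hbb : ⟪β, γ⟫ = ⟪β, β⟫ := by nlinarith
  refine hne (sub_eq_zero.1 (inner_self_eq_zero (𝕜 := ℝ) |>.1 ?_))
  rw [inner_sub_left, inner_sub_right, inner_sub_right, real_inner_comm β γ]
  linarith

lemma eq_of_eq_smul {β γ : EV n} (hβ : β ∈ P.Φ) (hγ : γ ∈ P.Φ) {c : ℝ} (hc : 0 < c)
    (h : β = c • γ) : β = γ := by
  by_contra hne
  have hγ0 := P.ne_zero_of_mem hγ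
  have hpos : 0 < ⟪β, γ⟫ := by
    rw [h, real_inner_smul_left]; exact mul_pos hc (real_inner_self_pos.2 hγ0)
  rcases P.pairing_eq_one_or_eq_one hβ hγ hne hpos with h1 | h1
  · have : c = 1 / 2 := by
      rw [h, pairing_eq_mul, real_inner_smul_left] at h1
      field_simp [inner_self_ne_zero.2 hγ0] at h1; linarith
    refine P.reduced β hβ ?_
    simpa [h, smul_smul, this] using hγ
  · have : c = 2 := by
      simp only [h, pairing_eq_mul, real_inner_smul_left, real_inner_smul_right] at h1
      field_simp [inner_self_ne_zero.2 hγ0] at h1; linarith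
    exact P.reduced γ hγ (this ▸ h ▸ hβ)

lemma coroot_neg_rootReflection (β γ : EV n) :
    coroot (-rootReflection β γ) = pairing β γ • coroot β - coroot γ := by
  rw [coroot_neg, coroot_rootReflection, neg_sub]

lemma exists_pairing_eq_sub {β γ : EV n} (hβ : β ∈ P.Φ) (hγ : γ ∈ P.Φ) (hne : β ≠ γ)
    (hpos : 0 < ⟪β, γ⟫) : ∃ δ ∈ P.Φ, ∀ x, pairing x δ = pairing x β - pairing x γ := by
  rcases P.pairing_eq_one_or_eq_one hβ hγ hne hpos with h1 | h1
  · refine ⟨_, P.neg_mem _ ((P.rootReflection_mem_iff hβ γ).2 hγ), fun x => ?_⟩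
    rw [pairing_eq_inner_coroot, coroot_neg_rootReflection, h1, one_smul, inner_sub_right,
      ← pairing_eq_inner_coroot, ← pairing_eq_inner_coroot]
  · refine ⟨_, (P.rootReflection_mem_iff hγ β).2 hβ, fun x => ?_⟩
    rw [pairing_eq_inner_coroot, coroot_rootReflection, h1, one_smul, inner_sub_right,
      ← pairing_eq_inner_coroot, ← pairing_eq_inner_coroot]

lemma sub_mem_of_two_le_pairing {β γ : EV n} (hβ : β ∈ P.Φ) (hγ : γ ∈ P.Φ) (hne : β ≠ γ)
    (hp : 2 ≤ pairing β γ) :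
    β - γ ∈ P.Φ ∧ ∀ x, pairing x (β - γ) = pairing β γ * pairing x β - pairing x γ := by
  have hpos : 0 < ⟪β, γ⟫ := (pairing_pos_iff (P.ne_zero_of_mem hγ)).1 (by linarith)
  have hq : pairing γ β = 1 :=
    (P.pairing_eq_one_or_eq_one hβ hγ hne hpos).resolve_left (by linarith)
  have hsub : β - γ = -rootReflection β γ := by rw [rootReflection_apply, hq]; module
  refine ⟨hsub ▸ P.neg_mem _ ((P.rootReflection_mem_iff hβ γ).2 hγ), fun x => ?_⟩
  rw [hsub, pairing_eq_inner_coroot, coroot_neg_rootReflection, inner_sub_right,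
    real_inner_smul_right, ← pairing_eq_inner_coroot, ← pairing_eq_inner_coroot]

lemma span_simple : Submodule.span ℝ (Set.range P.simple) = ⊤ := by
  have key : ∀ β ∈ P.pos, β ∈ Submodule.span ℝ (Set.range P.simple) := fun β hβ => by
    obtain ⟨c, rfl⟩ := P.pos_sum β hβ
    exact Submodule.sum_mem _ fun j _ => Submodule.smul_mem _ _ (Submodule.subset_span ⟨j, rfl⟩)
  refine eq_top_iff.2 (P.span_top ▸ Submodule.span_le.2 fun α hα => ?_)
  by_cases h : α ∈ P.pos
  · exact key α h
  · simpa using Submodule.neg_mem _ (key _ (P.neg_mem_pos_of_not_mem_pos hα h))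

noncomputable def simpleBasis : Module.Basis (Fin n) ℝ (EV n) :=
  basisOfTopLeSpanOfCardEqFinrank P.simple P.span_simple.ge (by simp)

lemma simpleBasis_apply (j : Fin n) : P.simpleBasis j = P.simple j :=
  congrFun (coe_basisOfTopLeSpanOfCardEqFinrank _ _ _) j

lemma repr_nonneg {β : EV n} (hβ : β ∈ P.pos) (j : Fin n) : 0 ≤ P.simpleBasis.repr β j := by
  obtain ⟨c, rfl⟩ := P.pos_sum β hβ
  simp_rw [← P.simpleBasis_apply, Module.Basis.repr_sum_self]
  positivity

lemma inner_eq_sum_repr (x β : EV n) :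
    ⟪x, β⟫ = ∑ j, P.simpleBasis.repr β j * ⟪x, P.simple j⟫ := by
  conv_lhs => rw [← P.simpleBasis.sum_repr β]
  simp [inner_sum, real_inner_smul_right, simpleBasis_apply]

lemma inner_nonneg_of_mem_pos {x β : EV n} (hx : ∀ j, 0 ≤ ⟪x, P.simple j⟫) (hβ : β ∈ P.pos) :
    0 ≤ ⟪x, β⟫ := by
  rw [inner_eq_sum_repr]
  exact sum_nonneg fun j _ => mul_nonneg (P.repr_nonneg hβ j) (hx j)

lemma inner_pos_of_mem_pos {x β : EV n} (hβ : β ∈ P.pos)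
    (hx : ∀ j, P.simpleBasis.repr β j ≠ 0 → 0 < ⟪x, P.simple j⟫) : 0 < ⟪x, β⟫ := by
  obtain ⟨j, hj⟩ : ∃ j, P.simpleBasis.repr β j ≠ 0 := by
    by_contra! h
    exact P.ne_zero_of_mem (P.pos_subset hβ) (P.simpleBasis.ext_elem_iff.2 (by simpa using h))
  rw [inner_eq_sum_repr]
  refine sum_pos' (fun k _ => ?_) ⟨j, mem_univ j,
    mul_pos ((P.repr_nonneg hβ j).lt_of_ne' hj) (hx j hj)⟩
  by_cases hk : P.simpleBasis.repr β k = 0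
  · simp [hk]
  · exact mul_nonneg (P.repr_nonneg hβ k) (hx k hk).le

lemma mem_pos_of_inner_pos {x α : EV n} (hx : ∀ j, 0 ≤ ⟪x, P.simple j⟫) (hα : α ∈ P.Φ)
    (h : 0 < ⟪x, α⟫) : α ∈ P.pos := by
  by_contra hneg
  have := P.inner_nonneg_of_mem_pos hx (P.neg_mem_pos_of_not_mem_pos hα hneg)
  rw [inner_neg_right] at this
  linarith

lemma exists_inner_simple_pos {β : EV n} (hβ : β ∈ P.pos) : ∃ j, 0 < ⟪β, P.simple j⟫ := by
  by_contra! h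
  have := P.inner_nonneg_of_mem_pos (x := -β) (fun j => by simpa using h j) hβ
  rw [inner_neg_left, neg_nonneg] at this
  exact P.ne_zero_of_mem (P.pos_subset hβ) (real_inner_self_nonpos.1 this)

lemma rootReflection_simple_mem_pos {j : Fin n} {β : EV n} (hβ : β ∈ P.pos)
    (hne : β ≠ P.simple j) : rootReflection (P.simple j) β ∈ P.pos := by
  have hmem := (P.rootReflection_mem_iff (P.simple_mem j) β).2 (P.pos_subset hβ)
  by_contra hneg
  have hrepr : ∀ k ≠ j, P.simpleBasis.repr β k = 0 := fun k hk => by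
    have h := P.repr_nonneg (P.neg_mem_pos_of_not_mem_pos hmem hneg) k
    simp [rootReflection_apply, ← P.simpleBasis_apply, hk.symm] at h
    exact le_antisymm h (P.repr_nonneg hβ k)
  have hβj : β = P.simpleBasis.repr β j • P.simple j := by
    conv_lhs => rw [← P.simpleBasis.sum_repr β]
    rw [sum_eq_single j (fun k _ hk => by rw [hrepr k hk, zero_smul]) (by simp),
      simpleBasis_apply]
  refine hne (P.eq_of_eq_smul (P.pos_subset hβ) (P.simple_mem j) ?_ hβj)
  refine (P.repr_nonneg hβ j).lt_of_ne' fun h0 => P.ne_zero_of_mem (P.pos_subset hβ) ?_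
  rw [hβj, h0, zero_smul]

lemma rootReflection_simple_mem_erase {j : Fin n} {β : EV n}
    (hβ : β ∈ P.pos.erase (P.simple j)) :
    rootReflection (P.simple j) β ∈ P.pos.erase (P.simple j) := by
  obtain ⟨hne, hβ⟩ := mem_erase.1 hβ
  refine mem_erase.2 ⟨fun h => ?_, P.rootReflection_simple_mem_pos hβ hne⟩
  have : -β = P.simple j := by
    rw [← rootReflection_rootReflection (P.simple j) β, h,
      rootReflection_self (P.simple_ne_zero j), neg_neg]
  exact P.not_mem_pos_of_neg_mem_pos (P.pos_subset hβ) (this ▸ P.simple_mem_pos j) hβ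

lemma rootReflection_simple_rho (j : Fin n) :
    rootReflection (P.simple j) P.rho = P.rho - P.simple j := by
  have hsum : ∑ β ∈ P.pos.erase (P.simple j), rootReflection (P.simple j) β =
      ∑ β ∈ P.pos.erase (P.simple j), β :=
    sum_nbij' _ _ (fun _ hβ => P.rootReflection_simple_mem_erase hβ)
      (fun _ hβ => P.rootReflection_simple_mem_erase hβ) (by simp) (by simp) (fun _ _ => rfl)
  simp only [rho, map_smul, map_sum]
  rw [← add_sum_erase _ _ (P.simple_mem_pos j), ← add_sum_erase _ _ (P.simple_mem_pos j), hsum,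
    rootReflection_self (P.simple_ne_zero j)]
  module

lemma pairing_rho_simple (j : Fin n) : pairing P.rho (P.simple j) = 1 := by
  have h := P.rootReflection_simple_rho j
  rw [rootReflection_apply, sub_right_inj] at h
  exact smul_left_injective ℝ (P.simple_ne_zero j) (h.trans (one_smul ℝ _).symm)

lemma inner_rho_simple_pos (j : Fin n) : 0 < ⟪P.rho, P.simple j⟫ :=
  (pairing_pos_iff (P.simple_ne_zero j)).1 (by rw [pairing_rho_simple]; exact one_pos)

lemma inner_rho_pos {β : EV n} (hβ : β ∈ P.pos) : 0 < ⟪P.rho, β⟫ :=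
  P.inner_pos_of_mem_pos hβ fun j _ => P.inner_rho_simple_pos j

lemma mem_pos_iff_inner_rho_pos {α : EV n} (hα : α ∈ P.Φ) : α ∈ P.pos ↔ 0 < ⟪P.rho, α⟫ :=
  ⟨P.inner_rho_pos, P.mem_pos_of_inner_pos (fun j => (P.inner_rho_simple_pos j).le) hα⟩

lemma inner_rho_ne_zero {α : EV n} (hα : α ∈ P.Φ) : ⟪P.rho, α⟫ ≠ 0 := by
  by_cases h : α ∈ P.pos
  · exact (P.inner_rho_pos h).ne'
  · have := P.inner_rho_pos (P.neg_mem_pos_of_not_mem_pos hα h)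
    rw [inner_neg_right] at this
    exact (neg_pos.1 this).ne

lemma pairing_rho_rootReflection_simple (j : Fin n) (β : EV n) :
    pairing P.rho (rootReflection (P.simple j) β) = pairing P.rho β - pairing (P.simple j) β := by
  rw [pairing_eq_inner_coroot, coroot_rootReflection, inner_sub_right, real_inner_smul_right,
    ← pairing_eq_inner_coroot, ← pairing_eq_inner_coroot, pairing_rho_simple, mul_one]

lemma exists_nat_pairing_rho_eq {β : EV n} (hβ : β ∈ P.pos) :
    ∃ m : ℕ, 0 < m ∧ pairing P.rho β = m := by
  obtain ⟨N, hN⟩ := exists_nat_gt (pairing P.rho β)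
  induction N generalizing β with
  | zero =>
    have := (pairing_pos_iff (P.ne_zero_of_mem (P.pos_subset hβ))).2 (P.inner_rho_pos hβ)
    exact absurd hN (by simpa using this.le)
  | succ N ih =>
    obtain ⟨j, hj⟩ := P.exists_inner_simple_pos hβ
    by_cases hne : β = P.simple j
    · exact ⟨1, one_pos, by rw [hne, pairing_rho_simple, Nat.cast_one]⟩
    -- `s_j` lowers the height by the positive integer `⟨α_j, β∨⟩`.
    obtain ⟨q, hq⟩ := P.pair_int _ (P.simple_mem j) β (P.pos_subset hβ)
    have hq0 : 0 < q := by
      have := (pairing_pos_iff (P.ne_zero_of_mem (P.pos_subset hβ))).2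
        (by rwa [real_inner_comm])
      exact_mod_cast hq ▸ this
    lift q to ℕ using hq0.le
    have hlow := P.pairing_rho_rootReflection_simple j β
    obtain ⟨m, hm0, hm⟩ := ih (P.rootReflection_simple_mem_pos hβ hne) (by
      rw [hlow, hq]; push_cast at hN ⊢
      have : (1 : ℝ) ≤ q := by exact_mod_cast hq0
      linarith)
    refine ⟨m + q, by omega, ?_⟩
    rw [hlow, hq] at hm
    push_cast at hm ⊢
    linarith

open scoped Classical in
/-- For `ϖ = ϖ_i` minuscule, `posLevel ϖ 1 = R⁺ \ R_i⁺` and `posLevel ϖ 0 = R_i⁺`. -/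
noncomputable def posLevel (ϖ : EV n) (m : ℝ) : Finset (EV n) :=
  P.pos.filter fun β => pairing ϖ β = m

lemma mem_posLevel {ϖ β : EV n} {m : ℝ} :
    β ∈ P.posLevel ϖ m ↔ β ∈ P.pos ∧ pairing ϖ β = m := by
  simp [posLevel]

/-- Used in place of the parabolic Weyl group `W_i`: the argument only needs a group with finite
orbits that contains the `s_j`, `j ≠ i`. -/
def autFixing (ϖ : EV n) : Subgroup (EV n ≃ₗᵢ[ℝ] EV n) where
  carrier := {g | (∀ α, g α ∈ P.Φ ↔ α ∈ P.Φ) ∧ g ϖ = ϖ}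
  mul_mem' {g h} hg hh := ⟨fun α => (hg.1 _).trans (hh.1 α), by simp [hg.2, hh.2]⟩
  one_mem' := ⟨fun _ => Iff.rfl, rfl⟩
  inv_mem' {g} hg := ⟨fun α => by simpa using (hg.1 (g⁻¹ α)).symm, by
    simpa using congrArg g.symm hg.2.symm⟩

lemma pairing_map_of_mem_autFixing {ϖ : EV n} {g : EV n ≃ₗᵢ[ℝ] EV n} (hg : g ∈ P.autFixing ϖ)
    (β : EV n) : pairing ϖ (g β) = pairing ϖ β := by
  conv_lhs => rw [← hg.2]
  exact pairing_map g ϖ β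

lemma finite_orbit_rho (ϖ : EV n) :
    ((fun g : EV n ≃ₗᵢ[ℝ] EV n => g P.rho) '' (P.autFixing ϖ : Set _)).Finite := by
  have : ((fun f : Fin n → EV n => ∑ j, P.simpleBasis.repr P.rho j • f j) ''
      Set.pi Set.univ fun _ => (P.Φ : Set (EV n))).Finite :=
    (Set.Finite.pi fun _ => P.Φ.finite_toSet).image _
  refine this.subset ?_
  rintro _ ⟨g, hg, rfl⟩
  refine ⟨fun j => g (P.simple j), fun j _ => (hg.1 _).2 (P.simple_mem j), ?_⟩
  conv_rhs => rw [← P.simpleBasis.sum_repr P.rho]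
  simp [map_sum, map_smul, simpleBasis_apply]

section FundWeight

variable {P} {i : Fin n} {ϖ : EV n}

lemma IsFundWeight.pairing_simple_self (hf : P.IsFundWeight i ϖ) :
    pairing ϖ (P.simple i) = 1 := by
  simpa using hf i

lemma IsFundWeight.inner_simple_eq_zero (hf : P.IsFundWeight i ϖ) {j : Fin n} (hj : j ≠ i) :
    ⟪ϖ, P.simple j⟫ = 0 :=
  (pairing_eq_zero_iff (P.simple_ne_zero j)).1 (by simpa [hj] using hf j)

lemma IsFundWeight.inner_simple_nonneg (hf : P.IsFundWeight i ϖ) (j : Fin n) :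
    0 ≤ ⟪ϖ, P.simple j⟫ := by
  rw [← pairing_nonneg_iff (P.simple_ne_zero j), hf j]
  split_ifs <;> norm_num

lemma IsFundWeight.mem_pos_of_pairing_pos (hf : P.IsFundWeight i ϖ) {α : EV n}
    (hα : α ∈ P.Φ) (h : 0 < pairing ϖ α) : α ∈ P.pos :=
  P.mem_pos_of_inner_pos hf.inner_simple_nonneg hα ((pairing_pos_iff (P.ne_zero_of_mem hα)).1 h)

lemma IsFundWeight.repr_eq_zero (hf : P.IsFundWeight i ϖ) {β : EV n} (hβ : β ∈ P.pos)
    (h : pairing ϖ β = 0) : P.simpleBasis.repr β i = 0 := by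
  have hβ0 := (pairing_eq_zero_iff (P.ne_zero_of_mem (P.pos_subset hβ))).1 h
  rw [P.inner_eq_sum_repr, sum_eq_single i (fun j _ hj => by rw [hf.inner_simple_eq_zero hj,
    mul_zero]) (by simp)] at hβ0
  have : 0 < ⟪ϖ, P.simple i⟫ :=
    (pairing_pos_iff (P.simple_ne_zero i)).1 (by rw [hf.pairing_simple_self]; exact one_pos)
  exact (mul_eq_zero.1 hβ0).resolve_right this.ne'

lemma IsFundWeight.rootReflection_simple (hf : P.IsFundWeight i ϖ) {j : Fin n} (hj : j ≠ i) :
    rootReflection (P.simple j) ϖ = ϖ := by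
  rw [rootReflection_apply, hf j, if_neg hj, zero_smul, sub_zero]

lemma IsFundWeight.rootReflection_mem_autFixing (hf : P.IsFundWeight i ϖ) {j : Fin n}
    (hj : j ≠ i) : rootReflection (P.simple j) ∈ P.autFixing ϖ :=
  ⟨P.rootReflection_mem_iff (P.simple_mem j), hf.rootReflection_simple hj⟩

lemma IsFundWeight.eq_smul (hf : P.IsFundWeight i ϖ) {x : EV n}
    (hx : ∀ j ≠ i, pairing x (P.simple j) = 0) : x = pairing x (P.simple i) • ϖ := by
  refine sub_eq_zero.1 (eq_zero_of_inner_eq_zero P.span_simple ?_)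
  rintro _ ⟨j, rfl⟩
  rw [← pairing_eq_zero_iff (P.simple_ne_zero j), pairing_sub_left, pairing_smul_left, hf j]
  by_cases hj : j = i
  · simp [hj]
  · simp [hj, hx j hj]

lemma IsFundWeight.not_mem_posIn (hf : P.IsFundWeight i ϖ) {α : EV n} (hα : α ∈ P.Φ)
    (h : pairing ϖ α ≠ 0) : α ∉ P.posIn i := by
  rintro ⟨-, hspan⟩
  have : Submodule.span ℝ (P.simple '' {j | j ≠ i}) ≤ LinearMap.ker (innerₛₗ ℝ ϖ) :=
    Submodule.span_le.2 (by rintro _ ⟨j, hj, rfl⟩; exact hf.inner_simple_eq_zero hj)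
  exact h ((pairing_eq_zero_iff (P.ne_zero_of_mem hα)).2 (by simpa using this hspan))

lemma Minuscule.not_dominant_sub (hm : P.Minuscule ϖ) {β : EV n} (hβ : β ∈ P.pos) :
    ¬P.Dominant (ϖ - β) := by
  intro hdom
  obtain ⟨-, hX, -, hmin⟩ := hm
  obtain ⟨c, hc⟩ := P.pos_sum β hβ
  have := hmin (ϖ - β) (P.weightLattice.sub_mem hX fun α hα => P.pair_int β (P.pos_subset hβ) α hα)
    hdom ⟨c, by rw [sub_sub_cancel, hc]⟩
  exact P.ne_zero_of_mem (P.pos_subset hβ) (sub_eq_self.1 this)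

/-- Otherwise `ϖ - β` would be a dominant weight below `ϖ`. -/
lemma two_le_pairing_simple (hf : P.IsFundWeight i ϖ) (hm : P.Minuscule ϖ) {β : EV n}
    (hβ : β ∈ P.pos) (h : ∀ j ≠ i, ⟪β, P.simple j⟫ ≤ 0) : 2 ≤ pairing β (P.simple i) := by
  by_contra! hlt
  have hle : pairing β (P.simple i) ≤ 1 := by
    obtain ⟨p, hp⟩ := P.pair_int β (P.pos_subset hβ) _ (P.simple_mem i)
    rw [hp] at hlt ⊢
    exact_mod_cast Int.lt_add_one_iff.1 (by exact_mod_cast hlt)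
  refine hm.not_dominant_sub hβ fun j => ?_
  rw [pairing_sub_left, hf j]
  split_ifs with hj
  · subst hj; linarith
  · have := (pairing_pos_iff (P.simple_ne_zero j)).not.2 (h j hj).not_gt
    linarith

lemma exists_lt_of_two_le_pairing (hf : P.IsFundWeight i ϖ) (hm : P.Minuscule ϖ) {β : EV n}
    (hβ : β ∈ P.pos) (h2 : 2 ≤ pairing ϖ β) :
    ∃ γ ∈ P.pos, 2 ≤ pairing ϖ γ ∧ ⟪P.rho, γ⟫ < ⟪P.rho, β⟫ := by
  by_cases hj : ∃ j ≠ i, 0 < ⟪β, P.simple j⟫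
  · obtain ⟨j, hji, hj⟩ := hj
    have hne : β ≠ P.simple j := by rintro rfl; simp [hf j, hji] at h2; linarith
    refine ⟨_, P.rootReflection_simple_mem_pos hβ hne,
      (P.pairing_map_of_mem_autFixing (hf.rootReflection_mem_autFixing hji) β).symm ▸ h2, ?_⟩
    rw [rootReflection_apply, inner_sub_right, real_inner_smul_right]
    have := (pairing_pos_iff (P.simple_ne_zero j)).2 hj
    nlinarith [P.inner_rho_simple_pos j]
  · push Not at hj
    have hne : β ≠ P.simple i := by rintro rfl; rw [hf.pairing_simple_self] at h2; linarith
    have hp := two_le_pairing_simple hf hm hβ hj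
    obtain ⟨hmem, hpair⟩ := P.sub_mem_of_two_le_pairing (P.pos_subset hβ) (P.simple_mem i) hne hp
    have hγ : pairing ϖ (β - P.simple i) = pairing β (P.simple i) * pairing ϖ β - 1 := by
      rw [hpair, hf.pairing_simple_self]
    refine ⟨_, hf.mem_pos_of_pairing_pos hmem (by rw [hγ]; nlinarith), by rw [hγ]; nlinarith, ?_⟩
    rw [inner_sub_right]
    linarith [P.inner_rho_simple_pos i]

lemma pairing_lt_two (hf : P.IsFundWeight i ϖ) (hm : P.Minuscule ϖ) {β : EV n}
    (hβ : β ∈ P.pos) : pairing ϖ β < 2 := by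
  classical
  by_contra! h2
  obtain ⟨γ, hγ, hmin⟩ := (P.pos.filter (2 ≤ pairing ϖ ·)).exists_min_image (⟪P.rho, ·⟫)
    ⟨β, mem_filter.2 ⟨hβ, h2⟩⟩
  obtain ⟨hγ, hγ2⟩ := mem_filter.1 hγ
  obtain ⟨δ, hδ, hδ2, hlt⟩ := exists_lt_of_two_le_pairing hf hm hγ hγ2
  exact (hmin δ (mem_filter.2 ⟨hδ, hδ2⟩)).not_gt hlt

lemma pairing_eq_zero_or_eq_one (hf : P.IsFundWeight i ϖ) (hm : P.Minuscule ϖ) {β : EV n}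
    (hβ : β ∈ P.pos) : pairing ϖ β = 0 ∨ pairing ϖ β = 1 := by
  obtain ⟨k, hk⟩ := hm.2.1 β (P.pos_subset hβ)
  have h0 := (pairing_nonneg_iff (P.ne_zero_of_mem (P.pos_subset hβ))).2
    (P.inner_nonneg_of_mem_pos hf.inner_simple_nonneg hβ)
  have h2 := pairing_lt_two hf hm hβ
  rw [hk] at h0 h2 ⊢
  have : 0 ≤ k := by exact_mod_cast h0
  have : k < 2 := by exact_mod_cast h2
  interval_cases k <;> simp

lemma IsFundWeight.mem_posLevel_one_iff (hf : P.IsFundWeight i ϖ) {β : EV n} :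
    β ∈ P.posLevel ϖ 1 ↔ β ∈ P.Φ ∧ pairing ϖ β = 1 := by
  rw [mem_posLevel]
  exact ⟨fun h => ⟨P.pos_subset h.1, h.2⟩,
    fun h => ⟨hf.mem_pos_of_pairing_pos h.1 (h.2 ▸ one_pos), h.2⟩⟩

lemma IsFundWeight.simple_mem_posLevel_one (hf : P.IsFundWeight i ϖ) :
    P.simple i ∈ P.posLevel ϖ 1 :=
  hf.mem_posLevel_one_iff.2 ⟨P.simple_mem i, hf.pairing_simple_self⟩

lemma sum_pos_eq_add (hf : P.IsFundWeight i ϖ) (hm : P.Minuscule ϖ) {M : Type*}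
    [AddCommMonoid M] (F : EV n → M) :
    ∑ β ∈ P.pos, F β = ∑ β ∈ P.posLevel ϖ 0, F β + ∑ β ∈ P.posLevel ϖ 1, F β := by
  classical
  rw [← sum_filter_add_sum_filter_not P.pos (fun β => pairing ϖ β = 0)]
  congr 1
  refine sum_congr (ext fun β => ?_) fun _ _ => rfl
  simp only [mem_filter, mem_posLevel, and_congr_right_iff]
  exact fun hβ => ⟨(pairing_eq_zero_or_eq_one hf hm hβ).resolve_left, fun h => by simp [h]⟩

lemma IsFundWeight.map_mem_posLevel_one (hf : P.IsFundWeight i ϖ) {g : EV n ≃ₗᵢ[ℝ] EV n}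
    (hg : g ∈ P.autFixing ϖ) {β : EV n} (hβ : β ∈ P.posLevel ϖ 1) : g β ∈ P.posLevel ϖ 1 := by
  rw [hf.mem_posLevel_one_iff] at hβ ⊢
  exact ⟨(hg.1 β).2 hβ.1, by rw [P.pairing_map_of_mem_autFixing hg, hβ.2]⟩

lemma IsFundWeight.sum_posLevel_one_map (hf : P.IsFundWeight i ϖ) {g : EV n ≃ₗᵢ[ℝ] EV n}
    (hg : g ∈ P.autFixing ϖ) : ∑ β ∈ P.posLevel ϖ 1, g β = ∑ β ∈ P.posLevel ϖ 1, β :=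
  sum_eq_sum_of_mapsTo (fun _ => hf.map_mem_posLevel_one hg) g.injective

lemma IsFundWeight.sum_posLevel_one_eq_smul (hf : P.IsFundWeight i ϖ) :
    ∑ β ∈ P.posLevel ϖ 1, β = pairing (∑ β ∈ P.posLevel ϖ 1, β) (P.simple i) • ϖ := by
  refine hf.eq_smul fun j hj => ?_
  have h := hf.sum_posLevel_one_map (hf.rootReflection_mem_autFixing hj)
  rw [← map_sum, rootReflection_apply, sub_eq_self, smul_eq_zero] at h
  exact h.resolve_right (P.simple_ne_zero j)

/-- A minimiser of `g ↦ ⟨g ρ, ρ⟩` on the finite orbit plays the role of the longest element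
of `W_i`. -/
lemma IsFundWeight.exists_mem_autFixing_inner_neg (hf : P.IsFundWeight i ϖ) :
    ∃ g ∈ P.autFixing ϖ, ∀ j ≠ i, ⟪P.rho, g (P.simple j)⟫ < 0 := by
  obtain ⟨_, ⟨u, hu, rfl⟩, hmin⟩ := Set.exists_min_image _ (⟪·, P.rho⟫) (P.finite_orbit_rho ϖ)
    ⟨_, 1, one_mem _, rfl⟩
  refine ⟨u⁻¹, inv_mem hu, fun j hj => ?_⟩
  have hle : ⟪u P.rho, P.rho⟫ ≤ ⟪rootReflection (P.simple j) (u P.rho), P.rho⟫ :=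
    hmin _ ⟨_, mul_mem (hf.rootReflection_mem_autFixing hj) hu, rfl⟩
  rw [LinearIsometryEquiv.inner_map_eq_flip (rootReflection _), rootReflection_symm,
    P.rootReflection_simple_rho, inner_sub_right] at hle
  have hflip : ⟪P.rho, u⁻¹ (P.simple j)⟫ = ⟪u P.rho, P.simple j⟫ :=
    (LinearIsometryEquiv.inner_map_eq_flip u _ _).symm
  rw [hflip]
  refine lt_of_le_of_ne (by linarith) fun h0 => P.inner_rho_ne_zero ?_ (hflip.trans h0)
  exact ((inv_mem hu).1 _).2 (P.simple_mem j)

lemma IsFundWeight.neg_map_mem_posLevel_zero (hf : P.IsFundWeight i ϖ)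
    {g : EV n ≃ₗᵢ[ℝ] EV n} (hg : g ∈ P.autFixing ϖ) (hneg : ∀ j ≠ i, ⟪P.rho, g (P.simple j)⟫ < 0)
    {β : EV n} (hβ : β ∈ P.posLevel ϖ 0) : -g β ∈ P.posLevel ϖ 0 := by
  obtain ⟨hβ, h0⟩ := P.mem_posLevel.1 hβ
  have hgβ : g β ∈ P.Φ := (hg.1 β).2 (P.pos_subset hβ)
  have hflip : ∀ x, ⟪P.rho, g x⟫ = ⟪g.symm P.rho, x⟫ := fun x => by
    rw [LinearIsometryEquiv.inner_map_eq_flip, LinearIsometryEquiv.symm_symm]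
  have hpos : 0 < ⟪P.rho, -g β⟫ := by
    rw [inner_neg_right, hflip, ← inner_neg_left]
    refine P.inner_pos_of_mem_pos hβ fun j hj => ?_
    have hji : j ≠ i := by rintro rfl; exact hj (hf.repr_eq_zero hβ h0)
    rw [inner_neg_left, ← hflip]
    linarith [hneg j hji]
  refine P.mem_posLevel.2 ⟨(P.mem_pos_iff_inner_rho_pos (P.neg_mem _ hgβ)).2 hpos, ?_⟩
  rw [pairing_neg_right, P.pairing_map_of_mem_autFixing hg, h0, neg_zero]

lemma IsFundWeight.map_rho (hf : P.IsFundWeight i ϖ) (hm : P.Minuscule ϖ)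
    {g : EV n ≃ₗᵢ[ℝ] EV n} (hg : g ∈ P.autFixing ϖ) (hneg : ∀ j ≠ i, ⟪P.rho, g (P.simple j)⟫ < 0) :
    g P.rho = ∑ β ∈ P.posLevel ϖ 1, β - P.rho := by
  have h0 : ∑ β ∈ P.posLevel ϖ 0, g β = -∑ β ∈ P.posLevel ϖ 0, β := by
    rw [← sum_eq_sum_of_mapsTo (fun _ => hf.neg_map_mem_posLevel_zero hg hneg)
      (neg_injective.comp g.injective), sum_neg_distrib, neg_neg]
  simp only [rho, map_smul, map_sum]
  rw [sum_pos_eq_add hf hm (fun β => g β), sum_pos_eq_add hf hm (fun β => β), h0,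
    hf.sum_posLevel_one_map hg]
  module

lemma exists_pairing_rho_eq_sub (hf : P.IsFundWeight i ϖ) (hm : P.Minuscule ϖ) {t : ℝ}
    (ht : ∑ β ∈ P.posLevel ϖ 1, β = t • ϖ) {β : EV n} (hβ : β ∈ P.posLevel ϖ 1) :
    ∃ γ ∈ P.posLevel ϖ 1, pairing P.rho γ = t - pairing P.rho β := by
  obtain ⟨g, hg, hneg⟩ := hf.exists_mem_autFixing_inner_neg
  have hgβ := hf.map_mem_posLevel_one hg hβ
  refine ⟨g β, hgβ, ?_⟩
  have := pairing_map g P.rho β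
  rw [hf.map_rho hm hg hneg, ht, pairing_sub_left, pairing_smul_left,
    (P.mem_posLevel.1 hgβ).2] at this
  linarith

end FundWeight

lemma sum_roots_eq {M : Type*} [AddCommMonoid M] (F : EV n → M) :
    ∑ α ∈ P.Φ, F α = ∑ β ∈ P.pos, (F β + F (-β)) := by
  classical
  rw [sum_add_distrib, ← sum_filter_add_sum_filter_not P.Φ (· ∈ P.pos), filter_mem_eq_inter,
    inter_eq_right.2 P.pos_subset]
  congr 1
  refine sum_equiv (Equiv.neg _) (fun α => ?_) fun α _ => by simp
  simp only [mem_filter, Equiv.neg_apply]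
  refine ⟨fun h => P.neg_mem_pos_of_not_mem_pos h.1 h.2, fun h => ?_⟩
  have hα : α ∈ P.Φ := by simpa using P.neg_mem _ (P.pos_subset h)
  exact ⟨hα, P.not_mem_pos_of_neg_mem_pos hα h⟩

noncomputable def casimir : EV n →ₗ[ℝ] EV n :=
  ∑ α ∈ P.Φ, ⟪α, α⟫⁻¹ • (innerₛₗ ℝ α).smulRight α

lemma casimir_apply (x : EV n) : P.casimir x = ∑ α ∈ P.Φ, (⟪α, x⟫ / ⟪α, α⟫) • α := by
  simp [casimir, div_eq_inv_mul, mul_smul]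

lemma inner_casimir_left (x y : EV n) :
    ⟪P.casimir x, y⟫ = ∑ α ∈ P.Φ, ⟪α, x⟫ * ⟪α, y⟫ / ⟪α, α⟫ := by
  simp only [casimir_apply, sum_inner, real_inner_smul_left]
  exact sum_congr rfl fun _ _ => by ring

lemma casimir_isSymmetric : P.casimir.IsSymmetric := fun x y => by
  rw [inner_casimir_left, real_inner_comm, inner_casimir_left]
  exact sum_congr rfl fun _ _ => by ring

lemma casimir_map {g : EV n ≃ₗᵢ[ℝ] EV n} (hg : ∀ α, g α ∈ P.Φ ↔ α ∈ P.Φ) (x : EV n) :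
    P.casimir (g x) = g (P.casimir x) := by
  rw [casimir_apply, casimir_apply, map_sum]
  refine (sum_equiv g.toEquiv (fun α => (hg α).symm) fun α _ => ?_).symm
  simp [LinearIsometryEquiv.inner_map_map, map_smul]

lemma eq_top_of_rootReflection_mem {V : Submodule ℝ (EV n)} (hV : V ≠ ⊥)
    (hinv : ∀ α ∈ P.Φ, ∀ x ∈ V, rootReflection α x ∈ V) : V = ⊤ := by
  classical
  have hdich : ∀ α ∈ P.Φ, α ∈ V ∨ ∀ x ∈ V, ⟪x, α⟫ = 0 := by
    refine fun α hα => or_iff_not_imp_right.2 fun h => ?_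
    push Not at h
    obtain ⟨x, hx, hxα⟩ := h
    have : pairing x α • α ∈ V := by
      simpa [rootReflection_apply] using V.sub_mem hx (hinv α hα x hx)
    exact (V.smul_mem_iff ((pairing_eq_zero_iff (P.ne_zero_of_mem hα)).not.2 hxα)).1 this
  have hs : P.Φ.filter (· ∈ V) = P.Φ := by
    refine P.irred _ (filter_subset _ _) ?_ fun α hα β hβ hαβ => ?_
    · by_contra hempty
      refine hV ((Submodule.eq_bot_iff V).2 fun x hx =>
        eq_zero_of_inner_eq_zero P.span_top fun α hα => ?_)
      exact (hdich α hα).resolve_left (fun h => hempty ⟨α, mem_filter.2 ⟨hα, h⟩⟩) x hx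
    · obtain ⟨-, hαV⟩ := mem_filter.1 hα
      refine mem_filter.2 ⟨hβ, (hdich β hβ).resolve_right fun h => hαβ ?_⟩
      exact h α hαV
  rw [eq_top_iff, ← P.span_top, Submodule.span_le]
  intro α hα
  exact (mem_filter.1 (by rwa [hs] : α ∈ P.Φ.filter (· ∈ V))).2

lemma exists_casimir_eq_smul : ∃ c : ℝ, ∀ x, P.casimir x = c • x := by
  rcases subsingleton_or_nontrivial (EV n) with h | h
  · exact ⟨0, fun x => Subsingleton.elim _ _⟩
  obtain ⟨c, hc⟩ : ∃ c, Module.End.HasEigenvalue P.casimir c :=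
    ⟨_, P.casimir_isSymmetric.hasEigenvalue_iSup_of_finiteDimensional⟩
  have htop := P.eq_top_of_rootReflection_mem hc fun α hα y hy => by
    rw [Module.End.mem_eigenspace_iff] at hy ⊢
    rw [P.casimir_map (P.rootReflection_mem_iff hα), hy, map_smul]
  refine ⟨c, fun x => Module.End.mem_eigenspace_iff.1 ?_⟩
  unfold Module.End.eigenspace
  rw [htop]
  trivial

/-- Taking traces: the trace of the Casimir operator is `|Φ|`. -/
lemma card_eq_mul_of_casimir_eq_smul {c : ℝ} (hc : ∀ x, P.casimir x = c • x) :
    (P.Φ.card : ℝ) = n * c := by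
  let b := EuclideanSpace.basisFun (Fin n) ℝ
  calc (P.Φ.card : ℝ) = ∑ α ∈ P.Φ, (∑ k, ⟪α, b k⟫ * ⟪b k, α⟫) / ⟪α, α⟫ := by
        rw [card_eq_sum_ones, Nat.cast_sum]
        refine sum_congr rfl fun α hα => ?_
        rw [b.sum_inner_mul_inner, div_self (inner_self_ne_zero.2 (P.ne_zero_of_mem hα)),
          Nat.cast_one]
    _ = ∑ k, ⟪P.casimir (b k), b k⟫ := by
        simp_rw [inner_casimir_left, sum_div]
        rw [sum_comm]
        refine sum_congr rfl fun k _ => sum_congr rfl fun α _ => ?_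
        rw [real_inner_comm α (b k)]
    _ = n * c := by simp [hc, real_inner_smul_left, b]

lemma inner_casimir_fundWeight {i : Fin n} {ϖ : EV n} (hf : P.IsFundWeight i ϖ)
    (hm : P.Minuscule ϖ) : ⟪P.casimir ϖ, ϖ⟫ = ⟪∑ β ∈ P.posLevel ϖ 1, β, ϖ⟫ := by
  have hterm : ∀ β, ⟪β, ϖ⟫ * ⟪β, ϖ⟫ / ⟪β, β⟫ + ⟪-β, ϖ⟫ * ⟪-β, ϖ⟫ / ⟪-β, -β⟫ =
      pairing ϖ β * ⟪β, ϖ⟫ := fun β => by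
    simp only [inner_neg_left, inner_neg_right, neg_neg, pairing, ip, real_inner_comm β ϖ]
    ring
  rw [inner_casimir_left, sum_roots_eq]
  simp_rw [hterm]
  rw [sum_pos_eq_add hf hm, sum_inner,
    sum_eq_zero fun β hβ => by rw [(P.mem_posLevel.1 hβ).2, zero_mul], zero_add]
  exact sum_congr rfl fun β hβ => by rw [(P.mem_posLevel.1 hβ).2, one_mul]

lemma card_roots_eq {i : Fin n} {ϖ : EV n} (hf : P.IsFundWeight i ϖ) (hm : P.Minuscule ϖ)
    {t : ℝ} (ht : ∑ β ∈ P.posLevel ϖ 1, β = t • ϖ) : (P.Φ.card : ℝ) = n * t := by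
  obtain ⟨c, hc⟩ := P.exists_casimir_eq_smul
  have hct : c = t := by
    have := P.inner_casimir_fundWeight hf hm
    rw [hc, ht, real_inner_smul_left, real_inner_smul_left] at this
    exact mul_right_cancel₀ (inner_self_ne_zero.2 hm.1) this
  rw [P.card_eq_mul_of_casimir_eq_smul hc, hct]

lemma exists_posLevel_one_pairing_rho_eq {i : Fin n} {ϖ : EV n} (hf : P.IsFundWeight i ϖ)
    (hm : P.Minuscule ϖ) {β : EV n} (hβ : β ∈ P.posLevel ϖ 1) (hne : β ≠ P.simple i) :
    ∃ γ ∈ P.posLevel ϖ 1,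
      pairing P.rho γ = pairing P.rho β - 1 ∨ pairing P.rho γ = 2 * pairing P.rho β - 1 := by
  obtain ⟨hβpos, hβ1⟩ := P.mem_posLevel.1 hβ
  by_cases hj : ∃ j ≠ i, 0 < ⟪β, P.simple j⟫
  · obtain ⟨j, hji, hj⟩ := hj
    have hnej : β ≠ P.simple j := by rintro rfl; simp [hf j, hji] at hβ1
    obtain ⟨δ, hδ, hpair⟩ := P.exists_pairing_eq_sub (P.pos_subset hβpos) (P.simple_mem j) hnej hj
    refine ⟨δ, hf.mem_posLevel_one_iff.2 ⟨hδ, ?_⟩, Or.inl ?_⟩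
    · rw [hpair, hβ1, hf j, if_neg hji, sub_zero]
    · rw [hpair, P.pairing_rho_simple]
  · push Not at hj
    have hp := two_le_pairing_simple hf hm hβpos hj
    obtain ⟨hmem, hpair⟩ := P.sub_mem_of_two_le_pairing (P.pos_subset hβpos) (P.simple_mem i) hne hp
    have h1 : pairing ϖ (β - P.simple i) = pairing β (P.simple i) - 1 := by
      rw [hpair, hβ1, hf.pairing_simple_self, mul_one]
    have hpos := hf.mem_pos_of_pairing_pos hmem (by rw [h1]; linarith)
    -- by minusculity `⟨ϖ, (β - α_i)∨⟩ ≤ 1`, which forces `⟨β, α_i∨⟩ = 2`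
    have hp2 : pairing β (P.simple i) = 2 := by
      rcases pairing_eq_zero_or_eq_one hf hm hpos with h | h <;> rw [h1] at h <;> linarith
    refine ⟨_, P.mem_posLevel.2 ⟨hpos, by rw [h1, hp2]; norm_num⟩, Or.inr ?_⟩
    rw [hpair, hp2, P.pairing_rho_simple]

/-- The reversal `⟨ρ, β∨⟩ ↦ t - ⟨ρ, β∨⟩` exchanges the lowest height `1` (at `α_i`) with the
highest one. -/
lemma eq_add_one_of_isMax {i : Fin n} {ϖ : EV n} (hf : P.IsFundWeight i ϖ) (hm : P.Minuscule ϖ)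
    {t : ℝ} (ht : ∑ β ∈ P.posLevel ϖ 1, β = t • ϖ) {βM : EV n} (hβM : βM ∈ P.posLevel ϖ 1)
    (hmax : ∀ β ∈ P.posLevel ϖ 1, pairing P.rho β ≤ pairing P.rho βM) :
    t = pairing P.rho βM + 1 := by
  obtain ⟨γ, hγ, hγt⟩ := P.exists_pairing_rho_eq_sub hf hm ht (hf.simple_mem_posLevel_one)
  obtain ⟨δ, hδ, hδt⟩ := P.exists_pairing_rho_eq_sub hf hm ht hβM
  obtain ⟨m, hm0, hmδ⟩ := P.exists_nat_pairing_rho_eq (P.mem_posLevel.1 hδ).1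
  have := hmax γ hγ
  rw [P.pairing_rho_simple] at hγt
  have : (1 : ℝ) ≤ m := by exact_mod_cast hm0
  linarith

lemma exists_heights_posLevel_one {i : Fin n} {ϖ : EV n} (hf : P.IsFundWeight i ϖ)
    (hm : P.Minuscule ϖ) {t : ℝ} (ht : ∑ β ∈ P.posLevel ϖ 1, β = t • ϖ) :
    ∃ M : ℕ, t = M + 1 ∧
      ∀ k : ℕ, 1 ≤ k → k ≤ M → ∃ β ∈ P.posLevel ϖ 1, pairing P.rho β = k := by
  obtain ⟨βM, hβM, hmax⟩ :=
    (P.posLevel ϖ 1).exists_max_image (pairing P.rho ·) ⟨_, hf.simple_mem_posLevel_one⟩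
  obtain ⟨M, -, hM⟩ := P.exists_nat_pairing_rho_eq (P.mem_posLevel.1 hβM).1
  have htM : t = M + 1 := hM ▸ P.eq_add_one_of_isMax hf hm ht hβM hmax
  let S : Set ℕ := {m | ∃ β ∈ P.posLevel ϖ 1, pairing P.rho β = m}
  have hle : ∀ m ∈ S, m ≤ M := by
    rintro m ⟨β, hβ, hβm⟩
    exact_mod_cast hβm ▸ hM ▸ hmax β hβ
  refine ⟨M, htM, fun k hk hkM => Nat.mem_of_symmetric_of_descend (S := S) ⟨βM, hβM, hM⟩ hle
    ?_ ?_ hk hkM⟩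
  · rintro m ⟨β, hβ, hβm⟩
    obtain ⟨γ, hγ, hγt⟩ := P.exists_pairing_rho_eq_sub hf hm ht hβ
    refine ⟨γ, hγ, ?_⟩
    rw [hγt, htM, hβm, Nat.cast_sub (by have := hle m ⟨β, hβ, hβm⟩; omega)]
    push_cast
    ring
  · rintro m ⟨β, hβ, hβm⟩ hm2
    have hne : β ≠ P.simple i := by
      rintro rfl
      rw [P.pairing_rho_simple] at hβm
      have : m = 1 := by exact_mod_cast hβm.symm
      omega
    obtain ⟨γ, hγ, h | h⟩ := P.exists_posLevel_one_pairing_rho_eq hf hm hβ hne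
    · exact Or.inl ⟨γ, hγ, by rw [h, hβm, Nat.cast_sub (by omega), Nat.cast_one]⟩
    · exact Or.inr ⟨γ, hγ, by rw [h, hβm, Nat.cast_sub (by omega)]; push_cast; ring⟩

end RootSystemData

theorem exists_posRoot_outside_parabolic_of_height_general
    {n : ℕ} (P : RootSystemData n) (i : Fin n) (ϖ : EV n)
    (hϖ : P.MinusculeFundWeight i ϖ) :
    ∀ k : ℕ, 1 ≤ k → k ≤ P.cox - 1 →
      ∃ α ∈ P.pos, α ∉ P.posIn i ∧ pairing P.rho α = (k : ℝ) := by
  obtain ⟨hf, hm⟩ := hϖ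
  have ht := hf.sum_posLevel_one_eq_smul
  obtain ⟨M, htM, hheights⟩ := P.exists_heights_posLevel_one hf hm ht
  have hcox : P.cox = M + 1 := by
    have hcard : (P.Φ.card : ℝ) = (n * (M + 1) : ℕ) := by
      rw [P.card_roots_eq hf hm ht, htM]; push_cast; ring
    rw [RootSystemData.cox, Nat.cast_inj.1 hcard, Nat.mul_div_cancel_left _ i.pos]
  intro k hk hkcox
  obtain ⟨β, hβ, hβk⟩ := hheights k hk (by omega)
  obtain ⟨hβpos, hβ1⟩ := P.mem_posLevel.1 hβ
  exact ⟨β, hβpos, hf.not_mem_posIn (P.pos_subset hβpos) (by rw [hβ1]; exact one_ne_zero), hβk⟩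

/-- For each `1 ≤ k ≤ h - 1` there is at least one positive root
`α ∈ R⁺ \ Rᵢ⁺` with `⟨ρ, α∨⟩ = k`, where `ϖᵢ` is a minuscule fundamental weight. -/
theorem exists_posRoot_outside_parabolic_of_height
    {n : ℕ} (hn : 1 ≤ n) (P : RootSystemData n) (i : Fin n) (ϖ : EV n)
    (hϖ : P.MinusculeFundWeight i ϖ) :
    ∀ k : ℕ, 1 ≤ k → k ≤ P.cox - 1 →
      ∃ α ∈ P.pos, α ∉ P.posIn i ∧ pairing P.rho α = (k : ℝ) :=
  exists_posRoot_outside_parabolic_of_height_general P i ϖ hϖ
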